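/- Let b ≥ 2 be even, k ≤ n-2, and let s = s_1...s_k be a prefix of some element of R_n(b). Let U = |{i ≤ k : s_i ≠ 0 and s_i even}| and M = min{b, max{s_i}_{i=1}^k + 1}. If t is the first sequence (under the co-Reflected Gray Code Order) in R_n(b) with prefix s, then: (1) if U is odd and M is even, t = s M 0...0; (2) if U is odd and M is odd, t = s M (M+1) 0...0; (3) if U is even, t = s 0...0. -/
import Mathlib


/-- `s` (0-indexed) is a restricted growth function of length `n`:
`s 0 = 0` and each next entry is at most the max of previous entries plus 1. -/
def IsRGF (n : ℕ) (s : ℕ → ℕ) : Prop :=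
  s 0 = 0 ∧ ∀ i, i + 1 < n → s (i + 1) ≤ (Finset.range (i + 1)).sup s + 1

/-- membership in `R_n(b)`: restricted growth function bounded by `b`. -/
def InRnb (n b : ℕ) (s : ℕ → ℕ) : Prop :=
  IsRGF n s ∧ ∀ i < n, s i ≤ b

/-- membership in `R*_n(b)`: restricted growth function with maximum exactly `b`. -/
def InRnbStar (n b : ℕ) (s : ℕ → ℕ) : Prop :=
  IsRGF n s ∧ (∀ i < n, s i ≤ b) ∧ ∃ i < n, s i = b

/-- Reflected Gray Code Order on length-`n` sequences. -/
def rgcLt (n : ℕ) (s t : ℕ → ℕ) : Prop :=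
  ∃ k < n, (∀ i < k, s i = t i) ∧
    ((Even (∑ i ∈ Finset.range k, s i) ∧ s k < t k) ∨
     (Odd (∑ i ∈ Finset.range k, s i) ∧ t k < s k))

/-- `U_k`: number of indices `i < k` with `s i` nonzero and even. -/
def Uval (s : ℕ → ℕ) (k : ℕ) : ℕ :=
  ((Finset.range k).filter (fun i => s i ≠ 0 ∧ Even (s i))).card

/-- co-Reflected Gray Code Order on length-`n` sequences. -/
def coRgcLt (n : ℕ) (s t : ℕ → ℕ) : Prop :=
  ∃ k < n, (∀ i < k, s i = t i) ∧
    ((Even (Uval s k) ∧ s k < t k) ∨ (Odd (Uval s k) ∧ t k < s k))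

lemma Uval_congr' {s t : ℕ → ℕ} {k : ℕ} (h : ∀ i < k, s i = t i) :
    Uval s k = Uval t k := by
  unfold Uval
  congr 1
  apply Finset.filter_congr
  intro i hi
  rw [h i (Finset.mem_range.mp hi)]

lemma Uval_succ' (s : ℕ → ℕ) (m : ℕ) :
    Uval s (m + 1) = Uval s m + (if s m ≠ 0 ∧ Even (s m) then 1 else 0) := by
  unfold Uval
  rw [Finset.range_add_one, Finset.filter_insert]
  split
  · rw [Finset.card_insert_of_notMem]
    intro hmem
    exact absurd (Finset.mem_range.mp (Finset.mem_of_mem_filter _ hmem)) (lt_irrefl m)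
  · simp

lemma Uval_zeros' {s : ℕ → ℕ} {k j : ℕ} (hkj : k ≤ j)
    (h : ∀ i, k ≤ i → i < j → s i = 0) : Uval s j = Uval s k := by
  induction j with
  | zero => interval_cases k; rfl
  | succ j ih =>
    rcases Nat.lt_or_ge j k with h1 | h1
    · have : k = j + 1 := by omega
      subst this; rfl
    · have hsj : s j = 0 := h j h1 (by omega)
      rw [Uval_succ', if_neg (by simp [hsj]), ih h1 (fun i hi hij => h i hi (by omega)),
        Nat.add_zero]

/-- form of the `⋖`-first sequence of `R_n(b)` (`b` even) with a fixed prefix. -/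
theorem stmt7 (n b k : ℕ) (hbeven : Even b) (hb2 : 2 ≤ b) (hk1 : 1 ≤ k) (hk : k + 2 ≤ n)
    (p t : ℕ → ℕ) (hp : InRnb n b p) (ht : InRnb n b t)
    (htp : ∀ i < k, t i = p i)
    (hfirst : ∀ u : ℕ → ℕ, InRnb n b u → (∀ i < k, u i = p i) →
      (∀ i < n, u i = t i) ∨ coRgcLt n t u) :
    (Odd (Uval p k) → Even (min b ((Finset.range k).sup p + 1)) →
      t k = min b ((Finset.range k).sup p + 1) ∧ ∀ i, k < i → i < n → t i = 0) ∧
    (Odd (Uval p k) → Odd (min b ((Finset.range k).sup p + 1)) →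
      t k = min b ((Finset.range k).sup p + 1) ∧
      t (k + 1) = min b ((Finset.range k).sup p + 1) + 1 ∧
      ∀ i, k + 1 < i → i < n → t i = 0) ∧
    (Even (Uval p k) → ∀ i, k ≤ i → i < n → t i = 0) := by
  have hkn : k < n := by omega
  have hk1n : k + 1 < n := by omega
  set S := (Finset.range k).sup p with hS
  set M := min b (S + 1) with hMdef
  have hM1 : 1 ≤ M := le_min (by omega) (by omega)
  have hMb : M ≤ b := min_le_left _ _
  have hMS : M ≤ S + 1 := min_le_right _ _
  have hsup : ∀ v : ℕ → ℕ, (∀ i < k, v i = p i) → (Finset.range k).sup v = S :=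
    fun v hv => Finset.sup_congr rfl (fun i hi => hv i (Finset.mem_range.mp hi))
  have hvk_le : ∀ v, InRnb n b v → (∀ i < k, v i = p i) → v k ≤ M := by
    intro v hv hvp
    have hkk : k - 1 + 1 = k := by omega
    have h1 := hv.1.2 (k - 1) (by omega)
    rw [hkk, hsup v hvp] at h1
    exact le_min (hv.2 k hkn) h1
  have hple : ∀ i < k, p i ≤ S := fun i hi => Finset.le_sup (Finset.mem_range.mpr hi)
  have hUtk : Uval t k = Uval p k := Uval_congr' htp
  have hge : ∀ (u : ℕ → ℕ) (j : ℕ), (∀ i < k, u i = p i) → (∀ i < j, t i = u i) →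
      ((Even (Uval t j) ∧ t j < u j) ∨ (Odd (Uval t j) ∧ u j < t j)) → k ≤ j := by
    intro u j hupre hagree hcase
    by_contra h
    push_neg at h
    have : t j = u j := by rw [htp j h, hupre j h]
    rcases hcase with ⟨_, h2⟩ | ⟨_, h2⟩ <;> omega
  refine ⟨?_, ?_, ?_⟩
  · -- U odd, M even
    intro hU hM
    set u : ℕ → ℕ := fun i => if i < k then p i else if i = k then M else 0 with hu
    have hupre : ∀ i < k, u i = p i := fun i hi => by simp [hu, hi]
    have huk : u k = M := by simp [hu]
    have hu0 : ∀ i, k < i → u i = 0 := fun i hi => by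
      simp only [hu]; rw [if_neg (by omega), if_neg (by omega)]
    have huRnb : InRnb n b u := by
      refine ⟨⟨by rw [hupre 0 hk1]; exact hp.1.1, ?_⟩, ?_⟩
      · intro i hi
        rcases Nat.lt_or_ge (i + 1) k with h1 | h1
        · have hsu : (Finset.range (i + 1)).sup p = (Finset.range (i + 1)).sup u :=
            Finset.sup_congr rfl fun j hj =>
              (hupre j (lt_trans (Finset.mem_range.mp hj) h1)).symm
          rw [hupre (i + 1) h1, ← hsu]
          exact hp.1.2 i (by omega)
        · rcases Nat.eq_or_lt_of_le h1 with h2 | h2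
          · rw [← h2, huk, hsup u hupre]
            exact hMS
          · rw [hu0 (i + 1) h2]; exact Nat.zero_le _
      · intro i hi
        rcases Nat.lt_or_ge i k with h1 | h1
        · rw [hupre i h1]; exact hp.2 i hi
        · rcases Nat.eq_or_lt_of_le h1 with h2 | h2
          · rw [← h2, huk]; exact hMb
          · rw [hu0 i h2]; exact Nat.zero_le _
    rcases hfirst u huRnb hupre with heq | ⟨j, hjn, hagree, hcase⟩
    · exact ⟨by rw [← heq k hkn, huk], fun i h1 h2 => by rw [← heq i h2, hu0 i h1]⟩
    · exfalso
      have hjk : k ≤ j := hge u j hupre hagree hcase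
      rcases Nat.eq_or_lt_of_le hjk with h2 | h2
      · rcases hcase with ⟨he, _⟩ | ⟨_, hlt⟩
        · rw [← h2, hUtk] at he
          simp [Nat.even_iff, Nat.odd_iff] at he hU; omega
        · have h3 := hvk_le t ht htp
          rw [← h2, huk] at hlt; omega
      · have htk : t k = M := by rw [hagree k h2, huk]
        have htz : ∀ i, k + 1 ≤ i → i < j → t i = 0 := fun i hi hij => by
          rw [hagree i hij, hu0 i (by omega)]
        have hUj : Uval t j = Uval p k + 1 := by
          rw [Uval_zeros' (by omega : k + 1 ≤ j) htz, Uval_succ', hUtk, htk,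
            if_pos ⟨by omega, hM⟩]
        have huj : u j = 0 := hu0 j h2
        rcases hcase with ⟨_, hlt⟩ | ⟨ho, _⟩
        · rw [huj] at hlt; omega
        · rw [hUj] at ho
          simp [Nat.even_iff, Nat.odd_iff] at ho hU; omega
  · -- U odd, M odd
    intro hU hM
    have hMSb : M = S + 1 ∧ M < b := by
      have h1 : M = b ∨ M = S + 1 := by
        rcases le_total b (S + 1) with h | h
        exacts [Or.inl (min_eq_left h), Or.inr (min_eq_right h)]
      rw [Nat.odd_iff] at hM
      rw [Nat.even_iff] at hbeven
      rcases h1 with h1 | h1 <;> omega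
    set u : ℕ → ℕ :=
      fun i => if i < k then p i else if i = k then M else if i = k + 1 then M + 1 else 0 with hu
    have hupre : ∀ i < k, u i = p i := fun i hi => by simp [hu, hi]
    have huk : u k = M := by simp [hu]
    obtain ⟨hMS1, hMblt⟩ := hMSb
    have huk1 : u (k + 1) = M + 1 := by
      simp only [hu]; rw [if_neg (by omega), if_neg (by omega)]; simp
    have hu0 : ∀ i, k + 1 < i → u i = 0 := fun i hi => by
      simp only [hu]; rw [if_neg (by omega), if_neg (by omega), if_neg (by omega)]
    have huRnb : InRnb n b u := by
      refine ⟨⟨by rw [hupre 0 hk1]; exact hp.1.1, ?_⟩, ?_⟩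
      · intro i hi
        rcases Nat.lt_or_ge (i + 1) k with h1 | h1
        · have hsu : (Finset.range (i + 1)).sup p = (Finset.range (i + 1)).sup u :=
            Finset.sup_congr rfl fun j hj =>
              (hupre j (lt_trans (Finset.mem_range.mp hj) h1)).symm
          rw [hupre (i + 1) h1, ← hsu]
          exact hp.1.2 i (by omega)
        · rcases Nat.eq_or_lt_of_le h1 with h2 | h2
          · rw [← h2, huk, hsup u hupre]
            exact hMS
          · by_cases h3 : i + 1 = k + 1
            · have hle : u k ≤ (Finset.range (k + 1)).sup u :=
                Finset.le_sup (Finset.self_mem_range_succ k)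
              rw [huk] at hle
              rw [h3, huk1]
              omega
            · rw [hu0 (i + 1) (by omega)]; exact Nat.zero_le _
      · intro i hi
        rcases Nat.lt_or_ge i k with h1 | h1
        · rw [hupre i h1]; exact hp.2 i hi
        · rcases Nat.eq_or_lt_of_le h1 with h2 | h2
          · rw [← h2, huk]; exact hMb
          · by_cases h3 : i = k + 1
            · rw [h3, huk1]; omega
            · rw [hu0 i (by omega)]; exact Nat.zero_le _
    rcases hfirst u huRnb hupre with heq | ⟨j, hjn, hagree, hcase⟩
    · exact ⟨by rw [← heq k hkn, huk], by rw [← heq (k + 1) hk1n, huk1],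
        fun i h1 h2 => by rw [← heq i h2, hu0 i h1]⟩
    · exfalso
      have hjk : k ≤ j := hge u j hupre hagree hcase
      rcases Nat.eq_or_lt_of_le hjk with h2 | h2
      · rcases hcase with ⟨he, _⟩ | ⟨_, hlt⟩
        · rw [← h2, hUtk] at he
          simp [Nat.even_iff, Nat.odd_iff] at he hU; omega
        · have h3 := hvk_le t ht htp
          rw [← h2, huk] at hlt; omega
      · have htk : t k = M := by rw [hagree k h2, huk]
        have hUk1 : Uval t (k + 1) = Uval p k := by
          rw [Uval_succ', hUtk, htk,
            if_neg (fun hc => (Nat.not_odd_iff_even.mpr hc.2) hM), Nat.add_zero]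
        by_cases h3 : j = k + 1
        · -- j = k + 1
          subst h3
          rcases hcase with ⟨he, _⟩ | ⟨_, hlt⟩
          · rw [hUk1] at he
            simp [Nat.even_iff, Nat.odd_iff] at he hU; omega
          · rw [huk1] at hlt
            have hsle : (Finset.range (k + 1)).sup t ≤ M := by
              refine Finset.sup_le fun i hi => ?_
              rcases Nat.lt_or_ge i k with h4 | h4
              · rw [htp i h4]
                have := hple i h4; omega
              · have : i = k := by
                  have := Finset.mem_range.mp hi; omega
                rw [this, htk]
            have h5 := ht.1.2 k (by omega)
            omega
        · -- j ≥ k + 2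
          have h3' : k + 2 ≤ j := by omega
          have htk1 : t (k + 1) = M + 1 := by rw [hagree (k + 1) (by omega), huk1]
          have htz : ∀ i, k + 2 ≤ i → i < j → t i = 0 := fun i hi hij => by
            rw [hagree i hij, hu0 i (by omega)]
          have hUj : Uval t j = Uval p k + 1 := by
            rw [Uval_zeros' (by omega : k + 2 ≤ j) htz,
              show k + 2 = (k + 1) + 1 from rfl, Uval_succ', hUk1, htk1,
              if_pos ⟨by omega, hM.add_one⟩]
          have huj : u j = 0 := hu0 j (by omega)
          rcases hcase with ⟨_, hlt⟩ | ⟨ho, _⟩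
          · rw [huj] at hlt; omega
          · rw [hUj] at ho
            simp [Nat.even_iff, Nat.odd_iff] at ho hU; omega
  · -- U even
    intro hU
    set u : ℕ → ℕ := fun i => if i < k then p i else 0 with hu
    have hupre : ∀ i < k, u i = p i := fun i hi => by simp [hu, hi]
    have hu0 : ∀ i, k ≤ i → u i = 0 := fun i hi => by
      simp only [hu]; rw [if_neg (by omega)]
    have huRnb : InRnb n b u := by
      refine ⟨⟨by rw [hupre 0 hk1]; exact hp.1.1, ?_⟩, ?_⟩
      · intro i hi
        rcases Nat.lt_or_ge (i + 1) k with h1 | h1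
        · have hsu : (Finset.range (i + 1)).sup p = (Finset.range (i + 1)).sup u :=
            Finset.sup_congr rfl fun j hj =>
              (hupre j (lt_trans (Finset.mem_range.mp hj) h1)).symm
          rw [hupre (i + 1) h1, ← hsu]
          exact hp.1.2 i (by omega)
        · rw [hu0 (i + 1) h1]; exact Nat.zero_le _
      · intro i hi
        rcases Nat.lt_or_ge i k with h1 | h1
        · rw [hupre i h1]; exact hp.2 i hi
        · rw [hu0 i h1]; exact Nat.zero_le _
    rcases hfirst u huRnb hupre with heq | ⟨j, hjn, hagree, hcase⟩
    · exact fun i h1 h2 => by rw [← heq i h2, hu0 i h1]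
    · exfalso
      have hjk : k ≤ j := hge u j hupre hagree hcase
      have htz : ∀ i, k ≤ i → i < j → t i = 0 := fun i hi hij => by
        rw [hagree i hij, hu0 i hi]
      have hUj : Uval t j = Uval p k := (Uval_zeros' hjk htz).trans hUtk
      have huj : u j = 0 := hu0 j hjk
      rcases hcase with ⟨_, hlt⟩ | ⟨ho, _⟩
      · rw [huj] at hlt; omega
      · rw [hUj] at ho
        simp [Nat.even_iff, Nat.odd_iff] at ho hU; omega
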